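/- arXiv:1706.00339 — 2 statements merged into one kernel-verified Lean document; each statement's English description precedes it below -/
import Mathlib

section
/- Fix m_h > 0, L0 > 0, contact points c1, c2 ∈ ℝ, a point q = (q1, q2) ∈ ℝ², and a reference slope σ ∈ ℝ. Let φ_i(q) = −(1/2)(L0 − L_i(q))² with L_i(q) = sqrt((q1 − c_i)² + q2²), and define the 2×2 decoupling matrix A with entries A_{1i} = (1/m_h)(σ ∂φ_i/∂q1 − ∂φ_i/∂q2) and A_{2i} = −(1/m_h) ∂φ_i/∂q1 for i = 1, 2. Then, provided L1(q) > 0 and L2(q) > 0, det A = (L0 − L1(q))(L0 − L2(q)) q2 (c1 − c2) / (m_h² L1(q) L2(q)). Consequently, A is invertible whenever 0 < L_i(q) < L0 for i = 1, 2, q2 ≠ 0, and c1 ≠ c2. -/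
/-! The gradient of `φ_i` is `((L0 - L_i) / L_i) • (q1 - c_i, q2)`, so column `i` of `A` is
`(L0 - L_i) / (m_h L_i)` times `(σ (q1 - c_i) - q2, -(q1 - c_i))`, and the determinant of these two
vectors is `q2 (c1 - c2)`. -/

/-- Leg length `L_i(q) = sqrt((q1 - c_i)^2 + q2^2)`. -/
noncomputable def legLen (c : ℝ) (q : ℝ × ℝ) : ℝ := Real.sqrt ((q.1 - c) ^ 2 + q.2 ^ 2)

/-- Control potential `φ_i(q) = -(1/2)(L0 - L_i(q))^2`. -/
noncomputable def phiPot (c L0 : ℝ) (q : ℝ × ℝ) : ℝ := -(1 / 2) * (L0 - legLen c q) ^ 2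

/-- Partial derivative `∂φ_i/∂q1`. -/
noncomputable def dphi1 (c L0 : ℝ) (q : ℝ × ℝ) : ℝ := fderiv ℝ (phiPot c L0) q (1, 0)

/-- Partial derivative `∂φ_i/∂q2`. -/
noncomputable def dphi2 (c L0 : ℝ) (q : ℝ × ℝ) : ℝ := fderiv ℝ (phiPot c L0) q (0, 1)

/-- The double-support decoupling matrix
`A_{1i} = (1/m_h)(σ ∂φ_i/∂q1 - ∂φ_i/∂q2)`, `A_{2i} = -(1/m_h) ∂φ_i/∂q1`. -/
noncomputable def Amat (mh L0 c1 c2 σ : ℝ) (q : ℝ × ℝ) : Matrix (Fin 2) (Fin 2) ℝ :=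
  !![(1 / mh) * (σ * dphi1 c1 L0 q - dphi2 c1 L0 q),
     (1 / mh) * (σ * dphi1 c2 L0 q - dphi2 c2 L0 q);
     -(1 / mh) * dphi1 c1 L0 q, -(1 / mh) * dphi1 c2 L0 q]

open ContinuousLinearMap

theorem legLen_sq (c : ℝ) (q : ℝ × ℝ) : legLen c q ^ 2 = (q.1 - c) ^ 2 + q.2 ^ 2 :=
  Real.sq_sqrt (by positivity)

theorem hasFDerivAt_legLen {c : ℝ} {q : ℝ × ℝ} (hL : legLen c q ≠ 0) :
    HasFDerivAt (legLen c)
      ((legLen c q)⁻¹ • ((q.1 - c) • fst ℝ ℝ ℝ + q.2 • snd ℝ ℝ ℝ)) q := by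
  have hsq : HasFDerivAt (fun p : ℝ × ℝ => (p.1 - c) ^ 2 + p.2 ^ 2)
      ((2 * (q.1 - c)) • fst ℝ ℝ ℝ + (2 * q.2) • snd ℝ ℝ ℝ) q := by
    refine (((hasFDerivAt_fst (p := q)).sub_const c).pow 2).add
      ((hasFDerivAt_snd (p := q)).pow 2) |>.congr_fderiv ?_
    ext <;> simp
  have hpos : (q.1 - c) ^ 2 + q.2 ^ 2 ≠ 0 := by
    rwa [← legLen_sq, pow_ne_zero_iff two_ne_zero]
  refine (hsq.sqrt hpos).congr_fderiv ?_
  ext <;> simp [legLen] <;> field_simp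

theorem fderiv_phiPot_apply {c : ℝ} (L0 : ℝ) {q : ℝ × ℝ} (hL : legLen c q ≠ 0) (v : ℝ × ℝ) :
    fderiv ℝ (phiPot c L0) q v
      = (L0 - legLen c q) / legLen c q * ((q.1 - c) * v.1 + q.2 * v.2) := by
  have h : HasFDerivAt (phiPot c L0) _ q :=
    (((hasFDerivAt_legLen hL).const_sub L0).pow 2).const_mul (-(1 / 2) : ℝ)
  rw [h.fderiv]
  simp only [smul_apply, add_apply, neg_apply, coe_fst', coe_snd', smul_eq_mul]
  field_simp
  ring

theorem dphi1_eq {c : ℝ} (L0 : ℝ) {q : ℝ × ℝ} (hL : legLen c q ≠ 0) :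
    dphi1 c L0 q = (L0 - legLen c q) * (q.1 - c) / legLen c q := by
  rw [dphi1, fderiv_phiPot_apply L0 hL]
  ring

theorem dphi2_eq {c : ℝ} (L0 : ℝ) {q : ℝ × ℝ} (hL : legLen c q ≠ 0) :
    dphi2 c L0 q = (L0 - legLen c q) * q.2 / legLen c q := by
  rw [dphi2, fderiv_phiPot_apply L0 hL]
  ring

theorem det_Amat (mh L0 c1 c2 σ : ℝ) {q : ℝ × ℝ} (hL1 : legLen c1 q ≠ 0)
    (hL2 : legLen c2 q ≠ 0) :
    (Amat mh L0 c1 c2 σ q).det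
      = (L0 - legLen c1 q) * (L0 - legLen c2 q) * q.2 * (c1 - c2)
          / (mh ^ 2 * legLen c1 q * legLen c2 q) := by
  rw [Amat, Matrix.det_fin_two_of, dphi1_eq L0 hL1, dphi1_eq L0 hL2, dphi2_eq L0 hL1,
    dphi2_eq L0 hL2]
  field_simp
  ring

theorem stmt2_general (mh L0 c1 c2 σ : ℝ) (q : ℝ × ℝ) (hmh : 0 < mh)
    (hL1 : 0 < legLen c1 q) (hL2 : 0 < legLen c2 q) :
    (Amat mh L0 c1 c2 σ q).det
      = (L0 - legLen c1 q) * (L0 - legLen c2 q) * q.2 * (c1 - c2)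
          / (mh ^ 2 * legLen c1 q * legLen c2 q) ∧
    (legLen c1 q < L0 → legLen c2 q < L0 → q.2 ≠ 0 → c1 ≠ c2 →
      IsUnit (Amat mh L0 c1 c2 σ q)) := by
  have hdet := det_Amat mh L0 c1 c2 σ hL1.ne' hL2.ne'
  refine ⟨hdet, fun h1 h2 hq hc => ?_⟩
  rw [Matrix.isUnit_iff_isUnit_det, isUnit_iff_ne_zero, hdet]
  have hs1 : L0 - legLen c1 q ≠ 0 := sub_ne_zero.2 h1.ne'
  have hs2 : L0 - legLen c2 q ≠ 0 := sub_ne_zero.2 h2.ne'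
  have hc12 : c1 - c2 ≠ 0 := sub_ne_zero.2 hc
  positivity

/-- Determinant of the double-support decoupling matrix of the V-SLIP control strategy, and
its invertibility whenever `0 < L_i(q) < L0`, `q2 ≠ 0` and `c1 ≠ c2`. -/
theorem stmt2 (mh L0 c1 c2 σ : ℝ) (q : ℝ × ℝ) (hmh : 0 < mh) (hL0 : 0 < L0)
    (hL1 : 0 < legLen c1 q) (hL2 : 0 < legLen c2 q) :
    (Amat mh L0 c1 c2 σ q).det
      = (L0 - legLen c1 q) * (L0 - legLen c2 q) * q.2 * (c1 - c2)
          / (mh ^ 2 * legLen c1 q * legLen c2 q) ∧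
    (legLen c1 q < L0 → legLen c2 q < L0 → q.2 ≠ 0 → c1 ≠ c2 →
      IsUnit (Amat mh L0 c1 c2 σ q)) :=
  stmt2_general mh L0 c1 c2 σ q hmh hL1 hL2
end

section
/- Let m_h, m_f > 0, M0 = diag(m_h, m_h, m_f, m_f), and for q = (q1, q2, q3, q4) ∈ ℝ⁴ let Z(q) be the Jacobian of z2(q) = (q1, q2, q1 − q4 cos q3, q2 − q4 sin q3) and M_ss(q) = Z(q)ᵀ M0 Z(q); let M_ds = diag(m_h, m_h). At a touchdown transition, given pre-transition momenta p_old = M_ss(q) q̇ with q̇ ∈ ℝ⁴, the post-transition double-support momenta are p_new = M_ds (q̇1, q̇2)ᵀ. Then the kinetic energy lost at the transition equals the kinetic energy of the swing foot: (1/2) p_oldᵀ M_ss(q)⁻¹ p_old − (1/2) p_newᵀ M_ds⁻¹ p_new = (1/2) m_f |ṡ|², where ṡ is the swing-foot velocity determined by ż2 = Z(q) q̇; in particular the loss is ≥ 0, with equality if and only if the swing foot is stationary at touchdown (here q4 ≠ 0 is assumed so that M_ss(q) is invertible). -/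
open Matrix

/-- The coordinates `z2(q) = (q1, q2, s1(q), s2(q))` of the V-SLIP model with feet and knees,
where `s(q) = (q1 - q4 cos q3, q2 - q4 sin q3)` is the swing-foot position
(indices: `q 0 = q1, q 1 = q2, q 2 = q3, q 3 = q4`). -/
noncomputable def z2map (q : Fin 4 → ℝ) : Fin 4 → ℝ :=
  ![q 0, q 1, q 0 - q 3 * Real.cos (q 2), q 1 - q 3 * Real.sin (q 2)]

/-- The Jacobian `Z(q) = ∂z2/∂q`. -/
noncomputable def Zmat (q : Fin 4 → ℝ) : Matrix (Fin 4) (Fin 4) ℝ :=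
  Matrix.of fun i j => fderiv ℝ (fun q' : Fin 4 → ℝ => z2map q' i) q (Pi.single j 1)

/-- `M0 = diag(m_h, m_h, m_f, m_f)`. -/
noncomputable def M0mat (mh mf : ℝ) : Matrix (Fin 4) (Fin 4) ℝ :=
  Matrix.diagonal ![mh, mh, mf, mf]

/-- The single-support mass matrix `M_ss(q) = Z(q)ᵀ M0 Z(q)`. -/
noncomputable def Mss (mh mf : ℝ) (q : Fin 4 → ℝ) : Matrix (Fin 4) (Fin 4) ℝ :=
  (Zmat q)ᵀ * M0mat mh mf * Zmat q

/-- The double-support mass matrix `M_ds = diag(m_h, m_h)`. -/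
noncomputable def Mds (mh : ℝ) : Matrix (Fin 2) (Fin 2) ℝ :=
  Matrix.diagonal ![mh, mh]

lemma Zmat_eq (q : Fin 4 → ℝ) : Zmat q =
    !![1,0,0,0; 0,1,0,0;
       1,0, q 3 * Real.sin (q 2), -Real.cos (q 2);
       0,1, -(q 3 * Real.cos (q 2)), -Real.sin (q 2)] := by
  have hp : ∀ k : Fin 4, HasFDerivAt (fun q' : Fin 4 → ℝ => q' k)
      (ContinuousLinearMap.proj k : (Fin 4 → ℝ) →L[ℝ] ℝ) q :=
    by
    intro k
    exact (ContinuousLinearMap.proj (R := ℝ) (φ := fun _ : Fin 4 => ℝ) k).hasFDerivAt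
  have hcos : HasFDerivAt (fun q' : Fin 4 → ℝ => Real.cos (q' 2))
      (-Real.sin (q 2) • (ContinuousLinearMap.proj 2 : (Fin 4 → ℝ) →L[ℝ] ℝ)) q := (hp 2).cos
  have hsin : HasFDerivAt (fun q' : Fin 4 → ℝ => Real.sin (q' 2))
      (Real.cos (q 2) • (ContinuousLinearMap.proj 2 : (Fin 4 → ℝ) →L[ℝ] ℝ)) q := (hp 2).sin
  have h2 : HasFDerivAt (fun q' : Fin 4 → ℝ => q' 0 - q' 3 * Real.cos (q' 2))
      ((ContinuousLinearMap.proj 0 : (Fin 4 → ℝ) →L[ℝ] ℝ)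
        - (q 3 • (-Real.sin (q 2) • (ContinuousLinearMap.proj 2 : (Fin 4 → ℝ) →L[ℝ] ℝ))
           + Real.cos (q 2) • (ContinuousLinearMap.proj 3 : (Fin 4 → ℝ) →L[ℝ] ℝ))) q :=
    (hp 0).sub ((hp 3).mul hcos)
  have h3 : HasFDerivAt (fun q' : Fin 4 → ℝ => q' 1 - q' 3 * Real.sin (q' 2))
      ((ContinuousLinearMap.proj 1 : (Fin 4 → ℝ) →L[ℝ] ℝ)
        - (q 3 • (Real.cos (q 2) • (ContinuousLinearMap.proj 2 : (Fin 4 → ℝ) →L[ℝ] ℝ))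
           + Real.sin (q 2) • (ContinuousLinearMap.proj 3 : (Fin 4 → ℝ) →L[ℝ] ℝ))) q :=
    (hp 1).sub ((hp 3).mul hsin)
  ext i j
  fin_cases i <;> [skip; skip; skip; skip] <;>
    simp only [Zmat, z2map, Matrix.of_apply, Matrix.cons_val_zero, Matrix.cons_val_one,
      Matrix.head_cons, Matrix.cons_val_two, Matrix.cons_val_three, Matrix.tail_cons,
      Fin.isValue, Fin.mk_zero, Fin.mk_one]
  · rw [(hp 0).fderiv]; fin_cases j <;> simp [Pi.single_apply]
  · rw [(hp 1).fderiv]; fin_cases j <;> simp [Pi.single_apply]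
  · show (fderiv ℝ (fun q' : Fin 4 → ℝ => q' 0 - q' 3 * Real.cos (q' 2)) q) (Pi.single j 1) = _
    rw [h2.fderiv]; fin_cases j <;>
      simp [Pi.single_apply, ContinuousLinearMap.proj_apply]
  · show (fderiv ℝ (fun q' : Fin 4 → ℝ => q' 1 - q' 3 * Real.sin (q' 2)) q) (Pi.single j 1) = _
    rw [h3.fderiv]; fin_cases j <;>
      simp [Pi.single_apply, ContinuousLinearMap.proj_apply]

/-- Compliant-impact energy loss at touchdown in the V-SLIP model with feet and knees:
with pre-transition momenta `p_old = M_ss(q) q̇` and post-transition double-support momenta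
`p_new = M_ds (q̇1, q̇2)ᵀ`, the kinetic energy lost equals the kinetic energy
`(1/2) m_f |ṡ|²` of the swing foot (where `ż2 = Z(q) q̇` and `ṡ = (ż2_3, ż2_4)`);
in particular the loss is nonnegative, and zero iff the swing foot is stationary. -/
theorem stmt15 (mh mf : ℝ) (hmh : 0 < mh) (hmf : 0 < mf)
    (q : Fin 4 → ℝ) (hq4 : q 3 ≠ 0) (qdot : Fin 4 → ℝ)
    (p_old : Fin 4 → ℝ) (hp_old : p_old = Mss mh mf q *ᵥ qdot)
    (p_new : Fin 2 → ℝ) (hp_new : p_new = Mds mh *ᵥ ![qdot 0, qdot 1])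
    (sdot : Fin 2 → ℝ)
    (hsdot : sdot = ![(Zmat q *ᵥ qdot) 2, (Zmat q *ᵥ qdot) 3]) :
    (1 / 2) * (p_old ⬝ᵥ ((Mss mh mf q)⁻¹ *ᵥ p_old))
        - (1 / 2) * (p_new ⬝ᵥ ((Mds mh)⁻¹ *ᵥ p_new))
      = (1 / 2) * mf * ((sdot 0) ^ 2 + (sdot 1) ^ 2) ∧
    0 ≤ (1 / 2) * (p_old ⬝ᵥ ((Mss mh mf q)⁻¹ *ᵥ p_old))
        - (1 / 2) * (p_new ⬝ᵥ ((Mds mh)⁻¹ *ᵥ p_new)) ∧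
    ((1 / 2) * (p_old ⬝ᵥ ((Mss mh mf q)⁻¹ *ᵥ p_old))
        - (1 / 2) * (p_new ⬝ᵥ ((Mds mh)⁻¹ *ᵥ p_new)) = 0 ↔ sdot = 0) := by
  have hZ := Zmat_eq q
  have hdetZ : (Zmat q).det = - q 3 := by
    rw [hZ, Matrix.det_succ_row_zero]
    simp [Fin.sum_univ_four, Matrix.det_fin_three, Matrix.submatrix_apply, Fin.succAbove]
    linear_combination (-q 3) * Real.sin_sq_add_cos_sq (q 2)
  have hdet : (Mss mh mf q).det = mh ^ 2 * mf ^ 2 * (q 3) ^ 2 := by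
    simp [Mss, Matrix.det_mul, Matrix.det_transpose, hdetZ, M0mat, Matrix.det_diagonal,
      Fin.prod_univ_four]
    ring
  have hunit : IsUnit (Mss mh mf q).det := by
    rw [hdet]
    exact (by positivity : mh ^ 2 * mf ^ 2 * (q 3) ^ 2 ≠ 0).isUnit
  have hinv : (Mss mh mf q)⁻¹ *ᵥ p_old = qdot := by
    rw [hp_old, Matrix.mulVec_mulVec, Matrix.nonsing_inv_mul _ hunit, Matrix.one_mulVec]
  have E1 : p_old ⬝ᵥ ((Mss mh mf q)⁻¹ *ᵥ p_old)
      = mh * (qdot 0 ^ 2 + qdot 1 ^ 2) + mf * (sdot 0 ^ 2 + sdot 1 ^ 2) := by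
    rw [hinv, hp_old, hsdot]
    simp [Mss, hZ, M0mat, Matrix.mulVec, dotProduct, Matrix.mul_apply,
      Matrix.diagonal_apply, Fin.sum_univ_four, Matrix.transpose_apply,
      Matrix.vecHead, Matrix.vecTail]
    ring
  have hMdsinv : (Mds mh)⁻¹ = Matrix.diagonal ![mh⁻¹, mh⁻¹] := by
    apply Matrix.inv_eq_right_inv
    ext i j
    fin_cases i <;> fin_cases j <;>
      simp [Mds, Matrix.mul_apply, Matrix.diagonal_apply, Fin.sum_univ_two] <;>
      field_simp
  have E2 : p_new ⬝ᵥ ((Mds mh)⁻¹ *ᵥ p_new) = mh * (qdot 0 ^ 2 + qdot 1 ^ 2) := by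
    rw [hp_new, hMdsinv]
    simp [Mds, Matrix.mulVec, dotProduct, Matrix.diagonal_apply, Fin.sum_univ_two]
    field_simp
  have main : (1 / 2) * (p_old ⬝ᵥ ((Mss mh mf q)⁻¹ *ᵥ p_old))
      - (1 / 2) * (p_new ⬝ᵥ ((Mds mh)⁻¹ *ᵥ p_new))
      = (1 / 2) * mf * ((sdot 0) ^ 2 + (sdot 1) ^ 2) := by
    rw [E1, E2]; ring
  refine ⟨main, ?_, ?_⟩
  · rw [main]; positivity
  · rw [main]
    constructor
    · intro h
      have h' : mf * (sdot 0 ^ 2 + sdot 1 ^ 2) = 0 := by linarith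
      have hS : sdot 0 ^ 2 + sdot 1 ^ 2 = 0 := by
        rcases mul_eq_zero.mp h' with h'' | h''
        · exact absurd h'' (ne_of_gt hmf)
        · exact h''
      have h0 : sdot 0 = 0 := by nlinarith [sq_nonneg (sdot 0), sq_nonneg (sdot 1)]
      have h1 : sdot 1 = 0 := by nlinarith [sq_nonneg (sdot 0), sq_nonneg (sdot 1)]
      funext i; fin_cases i <;> assumption
    · intro h; rw [h]; simp
end
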